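/- For integers 1 ≤ j ≤ k with k ≥ 2 and k + j even, letting f = WMON_{k,j}, the Chow parameter of every citizen satisfies, for each i with 2 ≤ i ≤ k: f̂({i}) = C(k−2, (k−j)/2 − 1) / 2^{k−1}. -/

import Mathlib

/-- sign(z) = 1 if z > 0 and 0 otherwise. -/
noncomputable def Rsign (z : ℝ) : ℝ := if 0 < z then 1 else 0

/-- Encoding of {-1,1}: `true ↦ 1`, `false ↦ -1`. -/
def pm (b : Bool) : ℝ := if b then 1 else -1

/-- The weak monarchy function WMON_{k,j}(x) = sign(j·x_1 + x_2 + ⋯ + x_k). -/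
noncomputable def WMON (k j : ℕ) (x : Fin k → Bool) : ℝ :=
  Rsign (∑ i : Fin k, (if (i : ℕ) = 0 then (j : ℝ) else 1) * pm (x i))

/-- The Chow parameter (degree-1 Fourier coefficient) f̂({i}) = 2^{-k}·Σ_x f(x)·x_i. -/
noncomputable def chow (k : ℕ) (f : (Fin k → Bool) → ℝ) (i : Fin k) : ℝ :=
  (∑ x, f x * pm (x i)) / 2 ^ k

/-- Binomial coefficient with integer lower index, with the convention
`C(n,r) = 0` for `r < 0`. -/
def chooseZ (n : ℕ) (r : ℤ) : ℕ := if 0 ≤ r then Nat.choose n r.toNat else 0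

/-! Pairing each input with its flip in the citizen coordinate `i` (of weight `1`), the Chow sum
counts the assignments of the other coordinates whose weighted sum `t` vanishes: `t` is even
because `k + j` is, and `sign (t + 1) - sign (t - 1)` is the indicator of `t = 0`. Splitting off the
monarch `x₁ = ±1` leaves the `z ∈ {±1}^(k-2)` with `∑ z = ∓j`; by the symmetry `z ↦ -z` both
counts equal `C(k-2, (k-j)/2 - 1)`, so the Chow parameter is `2 C(k-2, (k-j)/2 - 1) / 2^k`. -/

open Finset

@[simp] lemma pm_true : pm true = 1 := rfl

@[simp] lemma pm_false : pm false = -1 := rfl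

lemma Rsign_pm_true_add_sub_Rsign_pm_false_add {t : ℝ} (ht : ∃ m : ℤ, t = 2 * m) :
    Rsign (pm true + t) - Rsign (pm false + t) = if t = 0 then 1 else 0 := by
  obtain ⟨m, rfl⟩ := ht
  simp only [pm_true, pm_false]
  rcases lt_trichotomy m 0 with hm | rfl | hm
  · have : (m : ℝ) ≤ -1 := by exact_mod_cast Int.le_sub_one_of_lt hm
    simp only [Rsign]
    split_ifs <;> linarith
  · norm_num [Rsign]
  · have : (1 : ℝ) ≤ m := by exact_mod_cast hm
    simp only [Rsign]
    split_ifs <;> linarith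

section SignedSums

variable {α : Type*} [Fintype α]

lemma sum_pm_eq (z : α → Bool) :
    ∑ l, pm (z l) = 2 * (#{l | z l} : ℝ) - Fintype.card α := by
  have : ∀ b : Bool, pm b = 2 * (if b then 1 else 0) - 1 := by
    intro b; cases b <;> norm_num
  simp only [this, sum_sub_distrib, ← mul_sum, sum_boole, sum_const, card_univ, nsmul_eq_mul,
    mul_one]

lemma sum_pm_not (z : α → Bool) : ∑ l, pm (!z l) = -∑ l, pm (z l) := by
  rw [← sum_neg_distrib]
  exact sum_congr rfl fun l _ => by cases z l <;> simp

lemma exists_sum_pm_add_mul_pm_eq_two_mul {c : ℕ} (hc : Even (Fintype.card α + c))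
    (z : α → Bool) (a : Bool) : ∃ m : ℤ, ∑ l, pm (z l) + c * pm a = 2 * m := by
  obtain ⟨q, hq⟩ := hc
  refine ⟨#{l | z l} - q + if a then c else 0, ?_⟩
  have : (Fintype.card α : ℝ) + c = q + q := by exact_mod_cast hq
  rw [sum_pm_eq]
  cases a <;> simp <;> linarith

lemma card_filter_sum_pm_neg_eq [DecidableEq α] (c : ℝ) :
    #{z : α → Bool | ∑ l, pm (z l) = -c} = #{z : α → Bool | ∑ l, pm (z l) = c} := by
  refine card_nbij' (fun z l => !z l) (fun z l => !z l) ?_ ?_ (fun z _ => by simp)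
    (fun z _ => by simp)
  all_goals
    intro z hz
    simp only [mem_coe, mem_filter, mem_univ, true_and, sum_pm_not] at hz ⊢
    linarith

lemma card_filter_card_eq [DecidableEq α] (t : ℕ) :
    #{z : α → Bool | #{l | z l} = t} = (Fintype.card α).choose t := by
  rw [← card_univ, ← card_powersetCard]
  refine card_nbij' (fun z : α → Bool => ({l | z l} : Finset α))
    (fun (s : Finset α) l => decide (l ∈ s)) ?_ ?_ ?_ ?_
  · intro z hz
    simp_all [mem_powersetCard]
  · intro s hs
    simp_all [mem_powersetCard]
  · intro z _; ext l; simp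
  · intro s _; ext l; simp

lemma card_filter_sum_pm_eq [DecidableEq α] (r : ℤ) :
    #{z : α → Bool | ∑ l, pm (z l) = 2 * r - Fintype.card α} = chooseZ (Fintype.card α) r := by
  have hiff (z : α → Bool) :
      ∑ l, pm (z l) = 2 * r - Fintype.card α ↔ (#{l | z l} : ℤ) = r := by
    rw [sum_pm_eq]
    constructor <;> intro h
    · exact_mod_cast (by linarith : (#{l | z l} : ℝ) = r)
    · rw [← h]; push_cast; ring
  simp only [hiff, chooseZ]
  split_ifs with hr
  · rw [← card_filter_card_eq]
    congr 1; ext z; simp only [mem_filter, mem_univ, true_and]; omega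
  · rw [card_eq_zero, filter_eq_empty_iff]
    intro z _; omega

end SignedSums

lemma sum_mul_pm_eq_sum_sub {n : ℕ} (g : (Fin (n + 1) → Bool) → ℝ) (i : Fin (n + 1)) :
    ∑ x, g x * pm (x i) = ∑ y, (g (i.insertNth true y) - g (i.insertNth false y)) := by
  rw [← (Fin.insertNthEquiv (fun _ => Bool) i).sum_comp, Fintype.sum_prod_type, Fintype.sum_bool]
  simp [Fin.insertNthEquiv, sub_eq_add_neg, sum_add_distrib]

lemma WMON_insertNth_cons {n j : ℕ} {i : Fin (n + 2)} (hi : i ≠ 0) (b a : Bool)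
    (z : Fin n → Bool) :
    WMON (n + 2) j (i.insertNth b (Fin.cons a z)) = Rsign (pm b + (∑ l, pm (z l) + j * pm a)) := by
  rw [WMON, Fin.sum_univ_succAbove _ i, Fin.sum_univ_succ]
  simp only [Fin.insertNth_apply_same, Fin.insertNth_apply_succAbove, Fin.cons_zero, Fin.cons_succ]
  simp [hi, Fin.succAbove_ne_zero_zero hi, Fin.succAbove_ne_zero hi (Fin.succ_ne_zero _), add_comm]

theorem stmt_11_general (j k : ℕ)
    (he : Even (k + j)) :
    ∀ i : Fin k, (i : ℕ) ≠ 0 →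
      chow k (WMON k j) i
        = (chooseZ (k - 2) (((k : ℤ) - (j : ℤ)) / 2 - 1) : ℝ) / 2 ^ (k - 1) := by
  intro i hi
  obtain ⟨n, rfl⟩ : ∃ n, k = n + 2 := ⟨k - 2, by omega⟩
  replace hi : i ≠ 0 := fun h => hi (by simp [h])
  obtain ⟨q, hq⟩ := he
  set r : ℤ := ((n + 2 : ℕ) - (j : ℤ)) / 2 - 1
  have hr : -(j : ℝ) = 2 * r - Fintype.card (Fin n) := by
    have : -(j : ℤ) = 2 * r - n := by omega
    rw [Fintype.card_fin]; exact_mod_cast this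
  have heven : Even (Fintype.card (Fin n) + j) := ⟨q - 1, by simp; omega⟩
  calc chow (n + 2) (WMON (n + 2) j) i
      = (∑ y, (WMON (n + 2) j (i.insertNth true y) - WMON (n + 2) j (i.insertNth false y)))
          / 2 ^ (n + 2) := by rw [chow, sum_mul_pm_eq_sum_sub]
    _ = (∑ a : Bool, ∑ z : Fin n → Bool, if ∑ l, pm (z l) + j * pm a = 0 then 1 else 0)
          / 2 ^ (n + 2) := by
      rw [← (Fin.consEquiv _).sum_comp, Fintype.sum_prod_type]
      simp only [Fin.consEquiv, Equiv.coe_fn_mk, WMON_insertNth_cons hi,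
        Rsign_pm_true_add_sub_Rsign_pm_false_add
          (exists_sum_pm_add_mul_pm_eq_two_mul heven _ _)]
    _ = (#{z : Fin n → Bool | ∑ l, pm (z l) = -j} + #{z : Fin n → Bool | ∑ l, pm (z l) = j})
          / 2 ^ (n + 2) := by
      simp only [Fintype.sum_bool, sum_boole, pm_true, pm_false, mul_one, mul_neg_one,
        add_eq_zero_iff_eq_neg, neg_neg]
    _ = _ := by
      rw [← card_filter_sum_pm_neg_eq (j : ℝ), hr, card_filter_sum_pm_eq, Fintype.card_fin,
        Nat.add_sub_cancel, show n + 2 - 1 = n + 1 by omega, pow_succ]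
      field_simp
      ring

theorem stmt_11 (j k : ℕ) (hj : 1 ≤ j) (hjk : j ≤ k) (hk : 2 ≤ k)
    (he : Even (k + j)) :
    ∀ i : Fin k, (i : ℕ) ≠ 0 →
      chow k (WMON k j) i
        = (chooseZ (k - 2) (((k : ℤ) - (j : ℤ)) / 2 - 1) : ℝ) / 2 ^ (k - 1) :=
  stmt_11_general j k he
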